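/- arXiv:1402.1714 — 5 statements merged into one kernel-verified Lean document; each statement's English description precedes it below -/
import Mathlib

section
/- Let i : B → C be a regular embedding of complete Boolean algebras with associated retraction π_i, and let c ∈ C. Then the map i_c : B↾π_i(c) → C↾c defined by i_c(b) = i(b) ∧ c is a regular embedding of the complete Boolean algebras B↾π_i(c) and C↾c, and its associated retraction is the restriction of π_i: for every d ≤ c, π_{i_c}(d) = π_i(d). -/
/-!
The retraction `π` is the lower adjoint of `i`, since `i` preserves infima (dualize the
preservation of suprema through complements); hence `d ≤ i (π d)`.  The heart of the matter is
that `π (i x ⊓ c) = x` whenever `x ≤ π c`: if `i x ⊓ c ≤ i b` then `c ≤ i x ⇨ i b = i (x ⇨ b)`,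
so `x ≤ π c ≤ x ⇨ b`, i.e. `x ≤ b`.  This identity makes `b ↦ i b ⊓ c` injective below `π c`;
the remaining clauses are Boolean-algebra computations.
-/

namespace RegularEmbedding

variable {B C : Type*}

def retraction [CompleteLattice B] [LE C] (i : B → C) (c : C) : B :=
  sInf {b | c ≤ i b}

theorem retraction_mono [CompleteLattice B] [Preorder C] (i : B → C) :
    Monotone (retraction i) :=
  fun _ _ hcd => sInf_le_sInf fun _ hb => hcd.trans hb

theorem le_map_retraction [CompleteLattice B] [CompleteLattice C] {i : B → C}
    (hinf : ∀ S : Set B, i (sInf S) = sInf (i '' S)) (d : C) : d ≤ i (retraction i d) := by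
  rw [retraction, hinf, le_sInf_iff]
  rintro _ ⟨b, hb, rfl⟩
  exact hb

theorem map_sInf_of_map_sSup [CompleteBooleanAlgebra B] [CompleteBooleanAlgebra C] {i : B → C}
    (hsup : ∀ S : Set B, i (sSup S) = sSup (i '' S)) (hcompl : ∀ b : B, i bᶜ = (i b)ᶜ)
    (S : Set B) : i (sInf S) = sInf (i '' S) := by
  have hS : sInf S = (sSup (compl '' S))ᶜ := by
    rw [compl_sSup, sInf_eq_iInf]
    simp only [iInf_image, compl_compl]
  rw [hS, hcompl, hsup, compl_sSup, sInf_image]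
  simp only [iInf_image, hcompl, compl_compl]

theorem retraction_map_inf [CompleteBooleanAlgebra B] [BooleanAlgebra C] {i : B → C}
    (hsup : ∀ a b : B, i (a ⊔ b) = i a ⊔ i b) (hcompl : ∀ b : B, i bᶜ = (i b)ᶜ)
    {c : C} {x : B} (hx : x ≤ retraction i c) : retraction i (i x ⊓ c) = x := by
  refine le_antisymm (sInf_le inf_le_left) (le_sInf fun b hb => ?_)
  have hc : c ≤ i (x ⇨ b) := by
    rw [himp_eq, hsup, hcompl, ← himp_eq, le_himp_iff, inf_comm]
    exact hb
  have hxb : x ≤ x ⇨ b := hx.trans (sInf_le hc)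
  simpa using le_himp_iff.mp hxb

end RegularEmbedding

open RegularEmbedding in
theorem stmt6_general {B C : Type*} [CompleteBooleanAlgebra B] [CompleteBooleanAlgebra C]
    (i : B → C) (π : C → B)
    (hsup : ∀ S : Set B, i (sSup S) = sSup (i '' S))
    (hinf : ∀ a b : B, i (a ⊓ b) = i a ⊓ i b)
    (hcompl : ∀ b : B, i bᶜ = (i b)ᶜ)
    (hπ : ∀ c : C, π c = sInf {b : B | c ≤ i b})
    (c : C) :
    (∀ x : B, x ≤ π c → i x ⊓ c ≤ c) ∧
    (∀ x y : B, x ≤ π c → y ≤ π c → i x ⊓ c = i y ⊓ c → x = y) ∧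
    (∀ S : Set B, S ⊆ Set.Iic (π c) →
      i (sSup S) ⊓ c = sSup ((fun x => i x ⊓ c) '' S)) ∧
    (∀ x y : B, x ≤ π c → y ≤ π c → i (x ⊓ y) ⊓ c = (i x ⊓ c) ⊓ (i y ⊓ c)) ∧
    (∀ x : B, x ≤ π c → i (π c ⊓ xᶜ) ⊓ c = c ⊓ (i x ⊓ c)ᶜ) ∧
    (i (π c) ⊓ c = c) ∧
    (∀ d : C, d ≤ c → sInf {x : B | x ≤ π c ∧ d ≤ i x ⊓ c} = π d) := by
  obtain rfl : π = retraction i := funext hπ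
  have hsup₂ (a b : B) : i (a ⊔ b) = i a ⊔ i b := by
    rw [← sSup_pair, hsup, Set.image_pair, sSup_pair]
  have hle := le_map_retraction (map_sInf_of_map_sSup hsup hcompl)
  have hic : i (retraction i c) ⊓ c = c := inf_eq_right.mpr (hle c)
  refine ⟨fun x _ => inf_le_right, ?_, ?_, ?_, ?_, hic, ?_⟩
  · intro x y hx hy h
    rw [← retraction_map_inf hsup₂ hcompl hx, ← retraction_map_inf hsup₂ hcompl hy, h]
  · intro S _
    rw [hsup, sSup_inf_eq, sSup_image, iSup_image]
  · intro x y _ _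
    rw [hinf, inf_inf_inf_comm, inf_idem]
  · intro x _
    rw [hinf, hcompl, compl_inf, inf_sup_left, inf_compl_self, sup_bot_eq,
      inf_right_comm, hic, inf_comm]
  · intro d hd
    refine IsGLB.sInf_eq (IsLeast.isGLB ⟨⟨retraction_mono i hd, le_inf (hle d) hd⟩, ?_⟩)
    rintro x ⟨-, hx⟩
    exact sInf_le (hx.trans inf_le_left)

/-- Restriction: Let `i : B → C` be a regular embedding of complete
Boolean algebras with associated retraction `π`, and `c ∈ C`.  Then the map
`i_c : B↾π c → C↾c`, `b ↦ i b ⊓ c`, is a regular embedding of the restriction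
algebras `B↾π c = {x : x ≤ π c}` and `C↾c = {y : y ≤ c}` (it maps into `C↾c`, is
injective, preserves arbitrary suprema, binary meets, relative complements and the
top elements), and its associated retraction is the restriction of `π`: for every
`d ≤ c`, the infimum computed in `B↾π c` of `{x ≤ π c : i_c x ≥ d}` equals `π d`. -/
theorem stmt6 {B C : Type*} [CompleteBooleanAlgebra B] [CompleteBooleanAlgebra C]
    (i : B → C) (π : C → B)
    (hinj : Function.Injective i)
    (hsup : ∀ S : Set B, i (sSup S) = sSup (i '' S))
    (hinf : ∀ a b : B, i (a ⊓ b) = i a ⊓ i b)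
    (hcompl : ∀ b : B, i bᶜ = (i b)ᶜ)
    (htop : i (⊤ : B) = ⊤) (hbot : i (⊥ : B) = ⊥)
    (hπ : ∀ c : C, π c = sInf {b : B | c ≤ i b})
    (c : C) :
    (∀ x : B, x ≤ π c → i x ⊓ c ≤ c) ∧
    (∀ x y : B, x ≤ π c → y ≤ π c → i x ⊓ c = i y ⊓ c → x = y) ∧
    (∀ S : Set B, S ⊆ Set.Iic (π c) →
      i (sSup S) ⊓ c = sSup ((fun x => i x ⊓ c) '' S)) ∧
    (∀ x y : B, x ≤ π c → y ≤ π c → i (x ⊓ y) ⊓ c = (i x ⊓ c) ⊓ (i y ⊓ c)) ∧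
    (∀ x : B, x ≤ π c → i (π c ⊓ xᶜ) ⊓ c = c ⊓ (i x ⊓ c)ᶜ) ∧
    (i (π c) ⊓ c = c) ∧
    (∀ d : C, d ≤ c → sInf {x : B | x ≤ π c ∧ d ≤ i x ⊓ c} = π d) :=
  stmt6_general i π hsup hinf hcompl hπ c
end

section
/- Let i : B → C be a regular embedding of complete Boolean algebras with associated retraction π_i. Then the map π* : X_C → X_B, G ↦ π_i[G], is well defined (π_i[G] is an ultrafilter on B for every ultrafilter G on C), continuous, and open; moreover π*[N_c] = N_{π_i(c)} for every c ∈ C (in particular π* is surjective). -/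
/-- An ultrafilter on a Boolean algebra: a (proper) filter `G` such that for every
`b`, `b ∈ G` or `bᶜ ∈ G`. -/
def IsUltraOn {B : Type*} [BooleanAlgebra B] (G : Set B) : Prop :=
  G.Nonempty ∧ (∀ a ∈ G, ∀ b : B, a ≤ b → b ∈ G) ∧ (∀ a ∈ G, ∀ b ∈ G, a ⊓ b ∈ G) ∧
    (⊥ : B) ∉ G ∧ ∀ b : B, b ∈ G ∨ bᶜ ∈ G

/-- The Stone space of a Boolean algebra: the set of its ultrafilters. -/
def StoneSp (B : Type*) [BooleanAlgebra B] : Type _ := {G : Set B // IsUltraOn G}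

/-- The Stone topology, generated by the basic sets `N_b = {G : b ∈ G}`. -/
instance StoneSp.topologicalSpace (B : Type*) [BooleanAlgebra B] :
    TopologicalSpace (StoneSp B) :=
  TopologicalSpace.generateFrom {U : Set (StoneSp B) | ∃ b : B, U = {G : StoneSp B | b ∈ G.1}}

/-!
The retraction `π` is the left adjoint of `i`, which exists because `i` preserves infima. Since
`c ≤ i (π c)` and `π ∘ i = id`, every upward closed `G ⊆ C` satisfies `π[G] = i⁻¹[G]`, so `π*` is
the preimage map of a Boolean homomorphism: it is well defined and continuous.
Given an ultrafilter `H ∋ π c`, the filter generated by `c` and `i[H]` is proper, because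
`c ⊓ i b = ⊥` would mean `c ≤ i bᶜ`, i.e. `π c ≤ bᶜ`. By the Boolean prime ideal theorem it
extends to an ultrafilter `G`, and `H ⊆ i⁻¹[G]` forces equality. Hence `π*[N_c] = N_{π c}`;
openness follows, and surjectivity is the case `c = ⊤`.
-/

open Order

section CompleteLattice

variable {B C : Type*}

def CompleteLatticeHom.ofMapSSupCompl [CompleteBooleanAlgebra B] [CompleteBooleanAlgebra C]
    (i : B → C) (hsup : ∀ S : Set B, i (sSup S) = sSup (i '' S))
    (hcompl : ∀ b : B, i bᶜ = (i b)ᶜ) : CompleteLatticeHom B C where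
  toFun := i
  map_sInf' S := by
    have hS : sInf S = (sSup (compl '' S))ᶜ := by
      simp only [compl_sSup', Set.image_image, compl_compl, Set.image_id']
    rw [hS, hcompl, hsup, compl_sSup', Set.image_image, Set.image_image]
    simp only [← hcompl, compl_compl]
  map_sSup' := hsup

theorem GaloisConnection.of_eq_sInf_setOf_le [CompleteLattice B] [CompleteLattice C]
    {φ : sInfHom B C} {π : C → B} (hπ : ∀ c, π c = sInf {b | c ≤ φ b}) :
    GaloisConnection π φ := by
  intro c b
  rw [hπ]
  refine ⟨fun h => ?_, fun h => sInf_le h⟩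
  calc c ≤ φ (sInf {b | c ≤ φ b}) := by
        rw [map_sInf]; exact le_sInf (by rintro _ ⟨b', hb', rfl⟩; exact hb')
    _ ≤ φ b := OrderHomClass.mono φ h

end CompleteLattice

namespace IsUltraOn

variable {B C : Type*} [BooleanAlgebra B] [BooleanAlgebra C] {G H : Set B}

theorem isUpperSet (hG : IsUltraOn G) : IsUpperSet G :=
  fun a b hab ha => hG.2.1 a ha b hab

theorem inf_mem (hG : IsUltraOn G) {a b : B} (ha : a ∈ G) (hb : b ∈ G) : a ⊓ b ∈ G :=
  hG.2.2.1 a ha b hb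

theorem bot_notMem (hG : IsUltraOn G) : ⊥ ∉ G :=
  hG.2.2.2.1

theorem mem_or_compl_mem (hG : IsUltraOn G) (b : B) : b ∈ G ∨ bᶜ ∈ G :=
  hG.2.2.2.2 b

theorem top_mem (hG : IsUltraOn G) : ⊤ ∈ G :=
  let ⟨_, ha⟩ := hG.1
  hG.isUpperSet le_top ha

theorem compl_notMem (hG : IsUltraOn G) {a : B} (ha : a ∈ G) : aᶜ ∉ G := fun hac =>
  hG.bot_notMem (inf_compl_eq_bot (a := a) ▸ hG.inf_mem ha hac)

theorem eq_of_subset (hG : IsUltraOn G) (hH : IsUltraOn H) (hGH : G ⊆ H) : G = H := by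
  refine hGH.antisymm fun b hb => ?_
  exact (hG.mem_or_compl_mem b).resolve_right fun hbc => hH.compl_notMem hb (hGH hbc)

theorem preimage (φ : BoundedLatticeHom B C) {G : Set C} (hG : IsUltraOn G) :
    IsUltraOn (φ ⁻¹' G) := by
  refine ⟨⟨⊤, by simpa using hG.top_mem⟩,
    fun a ha b hab => hG.isUpperSet (OrderHomClass.mono φ hab) ha, fun a ha b hb => ?_,
    by simpa using hG.bot_notMem, fun b => ?_⟩
  · simpa using hG.inf_mem ha hb
  · simpa [map_compl'] using hG.mem_or_compl_mem (φ b)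

end IsUltraOn

theorem Order.Ideal.IsPrime.isUltraOn_compl {C : Type*} [BooleanAlgebra C] {J : Ideal C}
    (hJ : J.IsPrime) : IsUltraOn (J : Set C)ᶜ := by
  have htop : (⊤ : C) ∉ J := hJ.toIsProper.top_notMem
  refine ⟨⟨⊤, htop⟩, fun a ha b hab hb => ha (J.lower hab hb), fun a ha b hb hab => ?_,
    fun h => h J.bot_mem, fun b => ?_⟩
  · exact (hJ.mem_or_mem hab).elim ha hb
  · by_contra! h
    exact htop (sup_compl_eq_top (x := b) ▸ Ideal.sup_mem (not_not.1 h.1) (not_not.1 h.2))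

theorem Order.IsPFilter.exists_isUltraOn_superset {C : Type*} [BooleanAlgebra C] {F : Set C}
    (hF : IsPFilter F) (hbot : ⊥ ∉ F) : ∃ G, IsUltraOn G ∧ F ⊆ G := by
  obtain ⟨J, hJ, -, hFJ⟩ := DistribLattice.prime_ideal_of_disjoint_filter_ideal
    (F := hF.toPFilter) (I := Ideal.principal ⊥) (by
      refine Set.disjoint_left.2 fun x hx hxbot => hbot ?_
      rwa [le_bot_iff.1 (Ideal.mem_principal.1 hxbot)] at hx)
  exact ⟨_, hJ.isUltraOn_compl, Set.subset_compl_iff_disjoint_right.2 hFJ⟩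

section Retraction

variable {B C : Type*} [BooleanAlgebra B] [BooleanAlgebra C] {φ : BoundedLatticeHom B C}
  {π : C → B}

theorem image_eq_preimage_of_gc (gc : GaloisConnection π φ) (hφ : Function.Injective φ)
    {G : Set C} (hG : IsUpperSet G) : π '' G = φ ⁻¹' G := by
  ext b
  refine ⟨?_, fun hb => ⟨φ b, hb, hφ (gc.u_l_u_eq_u b)⟩⟩
  rintro ⟨c, hc, rfl⟩
  exact hG (gc.le_u_l c) hc

theorem exists_isUltraOn_preimage_eq (gc : GaloisConnection π φ) {H : Set B}
    (hH : IsUltraOn H) {c : C} (hc : π c ∈ H) :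
    ∃ G, IsUltraOn G ∧ c ∈ G ∧ φ ⁻¹' G = H := by
  set F : Set C := {x | ∃ b ∈ H, c ⊓ φ b ≤ x}
  have hF : IsPFilter F := by
    refine .of_def ⟨c, ⊤, hH.top_mem, inf_le_left⟩ ?_ ?_
    · rintro x ⟨b₁, hb₁, h₁⟩ y ⟨b₂, hb₂, h₂⟩
      have hmono := OrderHomClass.mono φ
      refine ⟨c ⊓ φ (b₁ ⊓ b₂), ⟨_, hH.inf_mem hb₁ hb₂, le_rfl⟩, ?_, ?_⟩
      · exact (inf_le_inf_left c (hmono inf_le_left)).trans h₁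
      · exact (inf_le_inf_left c (hmono inf_le_right)).trans h₂
    · rintro x y hxy ⟨b, hb, h⟩
      exact ⟨b, hb, h.trans hxy⟩
  have hbot : ⊥ ∉ F := by
    rintro ⟨b, hb, h⟩
    have : c ≤ φ bᶜ := by
      rw [map_compl']; exact le_compl_iff_disjoint_right.2 (disjoint_iff_inf_le.2 h)
    exact hH.compl_notMem hb (hH.isUpperSet (gc.l_le this) hc)
  obtain ⟨G, hG, hFG⟩ := hF.exists_isUltraOn_superset hbot
  refine ⟨G, hG, hFG ⟨⊤, hH.top_mem, inf_le_left⟩, ?_⟩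
  exact (hH.eq_of_subset (hG.preimage φ) fun b hb => hFG ⟨b, hb, inf_le_right⟩).symm

end Retraction

namespace StoneSp

variable {B C : Type*} [BooleanAlgebra B] [BooleanAlgebra C]

theorem isOpen_setOf_mem (b : B) : IsOpen {G : StoneSp B | b ∈ G.1} :=
  TopologicalSpace.isOpen_generateFrom_of_mem ⟨b, rfl⟩

theorem isTopologicalBasis :
    TopologicalSpace.IsTopologicalBasis
      {U : Set (StoneSp B) | ∃ b : B, U = {G : StoneSp B | b ∈ G.1}} := by
  refine ⟨?_, ?_, rfl⟩
  · rintro _ ⟨b₁, rfl⟩ _ ⟨b₂, rfl⟩ G ⟨h₁, h₂⟩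
    refine ⟨_, ⟨b₁ ⊓ b₂, rfl⟩, G.2.inf_mem h₁ h₂, fun G' hG' => ?_⟩
    exact ⟨G'.2.isUpperSet inf_le_left hG', G'.2.isUpperSet inf_le_right hG'⟩
  · exact Set.sUnion_eq_univ_iff.2 fun G => ⟨_, ⟨⊤, rfl⟩, G.2.top_mem⟩

theorem continuous_of_val_eq_preimage (φ : B → C) {f : StoneSp C → StoneSp B}
    (hf : ∀ G, (f G).1 = φ ⁻¹' G.1) : Continuous f := by
  refine continuous_generateFrom_iff.2 ?_
  rintro _ ⟨b, rfl⟩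
  convert isOpen_setOf_mem (φ b) using 1
  ext G
  simp [hf]

theorem isOpenMap_of_image_setOf_mem (π : C → B) {f : StoneSp C → StoneSp B}
    (hf : ∀ c, f '' {G | c ∈ G.1} = {H | π c ∈ H.1}) : IsOpenMap f := by
  refine isTopologicalBasis.isOpenMap_iff.2 ?_
  rintro _ ⟨c, rfl⟩
  rw [hf]
  exact isOpen_setOf_mem (π c)

theorem image_setOf_mem {φ : BoundedLatticeHom B C} {π : C → B} (gc : GaloisConnection π φ)
    {f : StoneSp C → StoneSp B} (hf : ∀ G, (f G).1 = φ ⁻¹' G.1) (c : C) :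
    f '' {G | c ∈ G.1} = {H | π c ∈ H.1} := by
  ext H
  constructor
  · rintro ⟨G, hG, rfl⟩
    show π c ∈ (f G).1
    rw [hf]
    exact G.2.isUpperSet (gc.le_u_l c) hG
  · intro hH
    obtain ⟨G, hG, hcG, hGH⟩ := exists_isUltraOn_preimage_eq gc H.2 hH
    exact ⟨⟨G, hG⟩, hcG, Subtype.ext ((hf _).trans hGH)⟩

end StoneSp

theorem stmt7_general {B C : Type*} [CompleteBooleanAlgebra B] [CompleteBooleanAlgebra C]
    (i : B → C) (π : C → B)
    (hinj : Function.Injective i)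
    (hsup : ∀ S : Set B, i (sSup S) = sSup (i '' S))
    (hcompl : ∀ b : B, i bᶜ = (i b)ᶜ)
    (hπ : ∀ c : C, π c = sInf {b : B | c ≤ i b}) :
    (∀ G : Set C, IsUltraOn G → IsUltraOn (π '' G)) ∧
    (∃ f : StoneSp C → StoneSp B, ∀ G : StoneSp C, (f G).1 = π '' G.1) ∧
    (∀ f : StoneSp C → StoneSp B, (∀ G : StoneSp C, (f G).1 = π '' G.1) →
      Continuous f ∧ IsOpenMap f ∧
      (∀ c : C, f '' {G : StoneSp C | c ∈ G.1} = {H : StoneSp B | π c ∈ H.1}) ∧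
      Function.Surjective f) := by
  set φ := CompleteLatticeHom.ofMapSSupCompl i hsup hcompl
  have gc : GaloisConnection π φ.toBoundedLatticeHom :=
    GaloisConnection.of_eq_sInf_setOf_le (φ := φ.tosInfHom) hπ
  have himage (G : Set C) (hG : IsUltraOn G) : π '' G = φ.toBoundedLatticeHom ⁻¹' G :=
    image_eq_preimage_of_gc gc hinj hG.isUpperSet
  have hultra (G : Set C) (hG : IsUltraOn G) : IsUltraOn (π '' G) :=
    himage G hG ▸ hG.preimage _
  refine ⟨hultra, ⟨fun G => ⟨π '' G.1, hultra _ G.2⟩, fun _ => rfl⟩, fun f hf => ?_⟩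
  have hf' (G : StoneSp C) : (f G).1 = φ.toBoundedLatticeHom ⁻¹' G.1 :=
    (hf G).trans (himage _ G.2)
  have hbasic := StoneSp.image_setOf_mem gc hf'
  refine ⟨StoneSp.continuous_of_val_eq_preimage _ hf',
    StoneSp.isOpenMap_of_image_setOf_mem π hbasic, hbasic, fun H => ?_⟩
  have hπtop : π ⊤ = ⊤ := by
    rw [← map_top φ]; exact hinj (gc.u_l_u_eq_u ⊤)
  obtain ⟨G, -, hG⟩ : H ∈ f '' {G | ⊤ ∈ G.1} := by
    rw [hbasic, Set.mem_ofPred_eq, hπtop]; exact H.2.top_mem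
  exact ⟨G, hG⟩

/-- For a regular embedding `i : B → C` of complete Boolean algebras with
associated retraction `π`, the map `π* : X_C → X_B`, `G ↦ π[G]`, is well defined
(`π[G]` is an ultrafilter on `B` whenever `G` is an ultrafilter on `C`), continuous and
open, and `π*[N_c] = N_{π c}` for every `c ∈ C`; in particular `π*` is surjective. -/
theorem stmt7 {B C : Type*} [CompleteBooleanAlgebra B] [CompleteBooleanAlgebra C]
    (i : B → C) (π : C → B)
    (hinj : Function.Injective i)
    (hsup : ∀ S : Set B, i (sSup S) = sSup (i '' S))
    (hinf : ∀ a b : B, i (a ⊓ b) = i a ⊓ i b)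
    (hcompl : ∀ b : B, i bᶜ = (i b)ᶜ)
    (htop : i (⊤ : B) = ⊤) (hbot : i (⊥ : B) = ⊥)
    (hπ : ∀ c : C, π c = sInf {b : B | c ≤ i b}) :
    (∀ G : Set C, IsUltraOn G → IsUltraOn (π '' G)) ∧
    (∃ f : StoneSp C → StoneSp B, ∀ G : StoneSp C, (f G).1 = π '' G.1) ∧
    (∀ f : StoneSp C → StoneSp B, (∀ G : StoneSp C, (f G).1 = π '' G.1) →
      Continuous f ∧ IsOpenMap f ∧
      (∀ c : C, f '' {G : StoneSp C | c ∈ G.1} = {H : StoneSp B | π c ∈ H.1}) ∧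
      Function.Surjective f) :=
  stmt7_general i π hinj hsup hcompl hπ
end

section
/- Let F = {i_{αβ} : B_α → B_β : α ≤ β < λ} be a complete iteration system and let A ⊆ T(F) be an antichain such that {f(α) : f ∈ A} is an antichain in B_α for some α < λ. Then the pointwise supremum ⋁̃A is the supremum of A in RO(T(F)); equivalently, every thread g ∈ T(F) with 0 < g ≤ ⋁̃A (pointwise) is compatible in T(F) with some f ∈ A, i.e. there is a nonzero thread h with h ≤ f and h ≤ g. -/
/-- A complete iteration system of complete Boolean algebras indexed by `ι`:
regular embeddings `emb : B a → B b` for `a ≤ b` (injective Boolean algebra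
homomorphisms preserving arbitrary suprema) which commute and are the identity
on the diagonal. -/
structure IterSys (ι : Type*) [Preorder ι] where
  B : ι → Type*
  cba : ∀ a, CompleteBooleanAlgebra (B a)
  emb : ∀ {a b : ι}, a ≤ b → B a → B b
  emb_refl : ∀ (a : ι) (x : B a), emb (le_refl a) x = x
  emb_trans : ∀ {a b c : ι} (hab : a ≤ b) (hbc : b ≤ c) (x : B a),
    emb hbc (emb hab x) = emb (hab.trans hbc) x
  emb_inj : ∀ {a b : ι} (h : a ≤ b), Function.Injective (emb h)
  emb_sSup : ∀ {a b : ι} (h : a ≤ b) (S : Set (B a)), emb h (sSup S) = sSup (emb h '' S)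
  emb_inf : ∀ {a b : ι} (h : a ≤ b) (x y : B a), emb h (x ⊓ y) = emb h x ⊓ emb h y
  emb_compl : ∀ {a b : ι} (h : a ≤ b) (x : B a), emb h xᶜ = (emb h x)ᶜ
  emb_top : ∀ {a b : ι} (h : a ≤ b), emb h (⊤ : B a) = (⊤ : B b)

attribute [instance] IterSys.cba

namespace IterSys

variable {ι : Type*} [Preorder ι] (F : IterSys ι)

/-- The retraction `π_{a b}` associated to the regular embedding `i_{a b}`. -/
def ret {a b : ι} (h : a ≤ b) (c : F.B b) : F.B a :=
  sInf {x : F.B a | c ≤ F.emb h x}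

/-- A thread of the iteration system (an element of the inverse limit `T(F)`). -/
def IsThread (f : ∀ a, F.B a) : Prop :=
  ∀ {a b : ι} (h : a ≤ b), F.ret h (f b) = f a

/-- A constant thread (an element of the direct limit `C(F)`). -/
def IsConstThread (f : ∀ a, F.B a) : Prop :=
  F.IsThread f ∧ ∃ a : ι, ∀ (b : ι) (h : a ≤ b), f b = F.emb h (f a)

/-- The pointwise order on threads. -/
def ThreadLE (f g : ∀ a, F.B a) : Prop := ∀ a, f a ≤ g a

/-- A thread is nonzero if some (equivalently, cofinally many) of its coordinates
are nonzero. -/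
def NonzeroThread (f : ∀ a, F.B a) : Prop := ∃ a, f a ≠ ⊥

/-- Two threads are compatible in `T(F)` if some nonzero thread lies below both. -/
def Compat (f g : ∀ a, F.B a) : Prop :=
  ∃ h, F.IsThread h ∧ F.NonzeroThread h ∧ F.ThreadLE h f ∧ F.ThreadLE h g

/-- Two constant threads are compatible in `C(F)` if some nonzero constant thread
lies below both. -/
def ConstCompat (f g : ∀ a, F.B a) : Prop :=
  ∃ h, F.IsConstThread h ∧ F.NonzeroThread h ∧ F.ThreadLE h f ∧ F.ThreadLE h g

end IterSys

/-!
Pick `f ∈ A` whose `α`-coordinate meets `g α`; such an `f` exists because `g α ≠ ⊥` lies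
below `⋁ {f α : f ∈ A}`. The thread generated by `x = g α ⊓ f α`, i.e. `π_{a α} x` below `α`
and `g a ⊓ i_{α a} x` above `α`, is nonzero and below `g`. It is also below `f`: above `α`,
every `f' ∈ A` with `f' ≠ f` satisfies `f' a ≤ i_{α a} (f' α)`, which is disjoint from
`i_{α a} (f α)`, so `(⋁̃A) a ⊓ i_{α a} (f α) ≤ f a`.
-/

namespace IterSys

section Preorder

variable {ι : Type*} [Preorder ι] (F : IterSys ι)

lemma emb_mono {a b : ι} (h : a ≤ b) : Monotone (F.emb h) := fun x y hxy => by
  rw [← inf_eq_left, ← F.emb_inf, inf_eq_left.mpr hxy]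

lemma emb_bot {a b : ι} (h : a ≤ b) : F.emb h (⊥ : F.B a) = ⊥ := by
  simpa using F.emb_sSup h ∅

lemma emb_sup {a b : ι} (h : a ≤ b) (x y : F.B a) :
    F.emb h (x ⊔ y) = F.emb h x ⊔ F.emb h y := by
  simpa [Set.image_pair] using F.emb_sSup h {x, y}

lemma emb_himp {a b : ι} (h : a ≤ b) (x y : F.B a) :
    F.emb h (x ⇨ y) = F.emb h x ⇨ F.emb h y := by
  rw [himp_eq, himp_eq, F.emb_sup, F.emb_compl]

lemma emb_sInf {a b : ι} (h : a ≤ b) (S : Set (F.B a)) :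
    F.emb h (sInf S) = sInf (F.emb h '' S) := by
  apply compl_injective
  rw [← F.emb_compl h, compl_sInf', compl_sInf', F.emb_sSup, Set.image_image, Set.image_image]
  simp only [F.emb_compl]

lemma gc_ret_emb {a b : ι} (h : a ≤ b) : GaloisConnection (F.ret h) (F.emb h) := by
  intro c x
  refine ⟨fun hx => le_trans ?_ (F.emb_mono h hx), fun hx => sInf_le hx⟩
  rw [ret, F.emb_sInf]
  exact le_sInf (Set.forall_mem_image.mpr fun _ hy => hy)

lemma ret_bot_iff {a b : ι} (h : a ≤ b) {c : F.B b} : F.ret h c = ⊥ ↔ c = ⊥ := by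
  rw [← le_bot_iff, F.gc_ret_emb h, F.emb_bot, le_bot_iff]

lemma ret_comp {a b c : ι} (hab : a ≤ b) (hbc : b ≤ c) (x : F.B c) :
    F.ret hab (F.ret hbc x) = F.ret (hab.trans hbc) x :=
  eq_of_forall_ge_iff fun y => by
    rw [F.gc_ret_emb, F.gc_ret_emb, F.gc_ret_emb, F.emb_trans]

lemma ret_emb_inf {a b : ι} (h : a ≤ b) (x : F.B a) (c : F.B b) :
    F.ret h (F.emb h x ⊓ c) = x ⊓ F.ret h c :=
  eq_of_forall_ge_iff fun y => by
    rw [F.gc_ret_emb, inf_comm (F.emb h x) c, ← le_himp_iff, ← F.emb_himp, ← F.gc_ret_emb,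
      le_himp_iff, inf_comm]

variable {F}

lemma IsThread.le_emb {f : ∀ a, F.B a} (hf : F.IsThread f) {a b : ι} (h : a ≤ b) :
    f b ≤ F.emb h (f a) :=
  hf h ▸ (F.gc_ret_emb h).le_u_l (f b)

variable (F)

/-- `⋁̃A` -/
def pointwiseSup (A : Set (∀ a, F.B a)) (a : ι) : F.B a :=
  sSup {x : F.B a | ∃ f ∈ A, x = f a}

lemma isThread_pointwiseSup {A : Set (∀ a, F.B a)} (hA : ∀ f ∈ A, F.IsThread f) :
    F.IsThread (F.pointwiseSup A) := by
  intro a b h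
  apply le_antisymm
  · rw [F.gc_ret_emb, pointwiseSup, sSup_le_iff]
    rintro _ ⟨f, hf, rfl⟩
    exact (IsThread.le_emb (hA f hf) h).trans (F.emb_mono h (le_sSup ⟨f, hf, rfl⟩))
  · refine sSup_le ?_
    rintro _ ⟨f, hf, rfl⟩
    rw [← hA f hf h]
    exact (F.gc_ret_emb h).monotone_l (le_sSup ⟨f, hf, rfl⟩)

lemma pointwiseSup_inf_emb_le {A : Set (∀ a, F.B a)} (hA : ∀ f ∈ A, F.IsThread f) {α : ι}
    (hα : ∀ f ∈ A, ∀ g ∈ A, f ≠ g → f α ⊓ g α = ⊥) {f : ∀ a, F.B a} (hf : f ∈ A)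
    {a : ι} (h : α ≤ a) :
    F.pointwiseSup A a ⊓ F.emb h (f α) ≤ f a := by
  rw [pointwiseSup, sSup_inf_eq]
  refine iSup₂_le ?_
  rintro _ ⟨f', hf', rfl⟩
  obtain rfl | hne := eq_or_ne f' f
  · exact inf_le_left
  · calc f' a ⊓ F.emb h (f α) ≤ F.emb h (f' α) ⊓ F.emb h (f α) :=
          inf_le_inf_right _ (IsThread.le_emb (hA f' hf') h)
      _ = ⊥ := by rw [← F.emb_inf, hα f' hf' f hf hne, F.emb_bot]
      _ ≤ f a := bot_le

end Preorder

section LinearOrder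

variable {ι : Type*} [LinearOrder ι] {F : IterSys ι}

lemma IsThread.apply_ne_bot {g : ∀ a, F.B a} (hg : F.IsThread g) (hg₀ : F.NonzeroThread g)
    (α : ι) : g α ≠ ⊥ := by
  obtain ⟨a, ha⟩ := hg₀
  intro hα
  rcases le_total a α with h | h
  · exact ha (by rw [← hg h, hα, F.ret_bot_iff])
  · exact ha ((F.ret_bot_iff h).mp (by rw [hg h, hα]))

variable (F)

def cut (g : ∀ a, F.B a) (α : ι) (x : F.B α) (a : ι) : F.B a :=
  if h : α ≤ a then g a ⊓ F.emb h x else F.ret (le_of_not_ge h) x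

variable {F}

lemma cut_of_le (g : ∀ a, F.B a) {α a : ι} (x : F.B α) (h : α ≤ a) :
    F.cut g α x a = g a ⊓ F.emb h x :=
  dif_pos h

lemma cut_of_lt (g : ∀ a, F.B a) {α a : ι} (x : F.B α) (h : a < α) :
    F.cut g α x a = F.ret h.le x :=
  dif_neg (not_le.mpr h)

lemma cut_self {g : ∀ a, F.B a} {α : ι} {x : F.B α} (hx : x ≤ g α) : F.cut g α x α = x := by
  rw [cut_of_le g x le_rfl, F.emb_refl, inf_eq_right.mpr hx]

lemma ret_cut {g : ∀ a, F.B a} (hg : F.IsThread g) {α a b : ι} (x : F.B α) (hαa : α ≤ a)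
    (hab : a ≤ b) : F.ret hab (F.cut g α x b) = F.cut g α x a := by
  rw [cut_of_le g x hαa, cut_of_le g x (hαa.trans hab), ← F.emb_trans hαa hab, inf_comm,
    F.ret_emb_inf, hg hab, inf_comm]

lemma isThread_cut {g : ∀ a, F.B a} (hg : F.IsThread g) {α : ι} {x : F.B α} (hx : x ≤ g α) :
    F.IsThread (F.cut g α x) := by
  intro a b hab
  rcases le_or_gt α a with hαa | haα
  · exact ret_cut hg x hαa hab
  rw [cut_of_lt g x haα]
  rcases le_or_gt α b with hαb | hbα
  · rw [← F.ret_comp haα.le hαb, ret_cut hg x le_rfl hαb, cut_self hx]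
  · rw [cut_of_lt g x hbα, F.ret_comp]

lemma cut_le {f g : ∀ a, F.B a} (hf : F.IsThread f) {α : ι} {x : F.B α} (hx : x ≤ f α)
    (hgf : ∀ a (h : α ≤ a), g a ⊓ F.emb h x ≤ f a) : F.ThreadLE (F.cut g α x) f := by
  intro a
  rcases le_or_gt α a with hαa | haα
  · rw [cut_of_le g x hαa]
    exact hgf a hαa
  · rw [cut_of_lt g x haα, ← hf haα.le]
    exact (F.gc_ret_emb haα.le).monotone_l hx

lemma cut_le_self {g : ∀ a, F.B a} (hg : F.IsThread g) {α : ι} {x : F.B α} (hx : x ≤ g α) :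
    F.ThreadLE (F.cut g α x) g :=
  cut_le hg hx fun _ _ => inf_le_left

end LinearOrder

end IterSys

theorem stmt8_general {ι : Type*} [LinearOrder ι] (F : IterSys ι)
    (A : Set (∀ a, F.B a)) (hA : ∀ f ∈ A, F.IsThread f)
    (α : ι) (hα : ∀ f ∈ A, ∀ g ∈ A, f ≠ g → f α ⊓ g α = ⊥) :
    F.IsThread (fun a => sSup {x : F.B a | ∃ f ∈ A, x = f a}) ∧
    ∀ g : ∀ a, F.B a, F.IsThread g → F.NonzeroThread g →
      (∀ a, g a ≤ sSup {x : F.B a | ∃ f ∈ A, x = f a}) →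
      ∃ f ∈ A, F.Compat f g := by
  refine ⟨F.isThread_pointwiseSup hA, fun g hg hg₀ hgA => ?_⟩
  obtain ⟨f, hf, hgf⟩ : ∃ f ∈ A, g α ⊓ f α ≠ ⊥ := by
    by_contra! hdisj
    refine hg.apply_ne_bot hg₀ α ?_
    rw [← inf_eq_left.mpr (hgA α), inf_sSup_eq, iSup₂_eq_bot]
    rintro _ ⟨f, hf, rfl⟩
    exact hdisj f hf
  have hxg : g α ⊓ f α ≤ g α := inf_le_left
  refine ⟨f, hf, F.cut g α (g α ⊓ f α), IterSys.isThread_cut hg hxg,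
    ⟨α, by rwa [IterSys.cut_self hxg]⟩, IterSys.cut_le (hA f hf) inf_le_right fun a h => ?_,
    IterSys.cut_le_self hg hxg⟩
  calc g a ⊓ F.emb h (g α ⊓ f α) ≤ F.pointwiseSup A a ⊓ F.emb h (f α) :=
        inf_le_inf (hgA a) (F.emb_mono h inf_le_right)
    _ ≤ f a := F.pointwiseSup_inf_emb_le hA hα hf h

/-- Let `F` be a complete iteration system and `A ⊆ T(F)` an antichain
such that `{f α : f ∈ A}` is an antichain in `B α` for some `α`.  Then the pointwise
supremum `⋁̃A` is the supremum of `A` in `RO(T(F))`: it is a thread, and every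
nonzero thread `g` below `⋁̃A` is compatible in `T(F)` with some `f ∈ A`. -/
theorem stmt8 {ι : Type*} [LinearOrder ι] (F : IterSys ι)
    (A : Set (∀ a, F.B a)) (hA : ∀ f ∈ A, F.IsThread f)
    (hAanti : ∀ f ∈ A, ∀ g ∈ A, f ≠ g → ¬ F.Compat f g)
    (α : ι) (hα : ∀ f ∈ A, ∀ g ∈ A, f ≠ g → f α ⊓ g α = ⊥) :
    F.IsThread (fun a => sSup {x : F.B a | ∃ f ∈ A, x = f a}) ∧
    ∀ g : ∀ a, F.B a, F.IsThread g → F.NonzeroThread g →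
      (∀ a, g a ≤ sSup {x : F.B a | ∃ f ∈ A, x = f a}) →
      ∃ f ∈ A, F.Compat f g :=
  stmt8_general F A hA α hα
end

section
/- (Fodor) Let X be an uncountable set. The club filter CF_X is normal: the diagonal intersection Δ_{a∈X} C_a = {z ∈ 𝒫(X) : ∀a ∈ z, z ∈ C_a} of any X-indexed family of clubs C_a on 𝒫(X) contains a club on 𝒫(X). Equivalently, every function g : 𝒫(X) → X which is regressive on a stationary set S (i.e. g(Y) ∈ Y for all Y ∈ S) is constant on a stationary subset of S. -/
/-!
A single function `F` encodes all the closure functions `f a` of an `X`-indexed family of clubs,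
via `F (a :: l) = f a l`: a set closed under `F` that contains `a` is closed under `f a`, so the club
of `F` lies in the diagonal intersection. Fodor's lemma follows: if every fibre `S ∩ g⁻¹{x}` missed
a club `C x`, the diagonal intersection of the `C x` would meet `S` in some `Y`, and then `Y` lies
both in `C (g Y)` and in the fibre over `g Y`.
-/

/-- `C` is a club on `𝒫(X)`: the set of subsets of `X` closed under some function
`f : X^{<ω} → X` (finite sequences are encoded as lists). -/
def IsClubOn (X : Type*) (C : Set (Set X)) : Prop :=
  ∃ f : List X → X, C = {Y : Set X | ∀ l : List X, (∀ x ∈ l, x ∈ Y) → f l ∈ Y}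

/-- `S` is stationary on `𝒫(X)`: it meets every club on `𝒫(X)`. -/
def IsStationaryOn (X : Type*) (S : Set (Set X)) : Prop :=
  ∀ C : Set (Set X), IsClubOn X C → (S ∩ C).Nonempty

/-- The club filter on `𝒫(X)`: the collection of subsets of `𝒫(X)` containing a club. -/
def ClubFilterOn (X : Type*) : Set (Set (Set X)) :=
  {A : Set (Set X) | ∃ C : Set (Set X), IsClubOn X C ∧ C ⊆ A}

section

variable {X : Type*} [Nonempty X]

theorem exists_isClubOn_subset_diagonal {C : X → Set (Set X)} (hC : ∀ a, IsClubOn X (C a)) :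
    ∃ D : Set (Set X), IsClubOn X D ∧ D ⊆ {z : Set X | ∀ a ∈ z, z ∈ C a} := by
  choose f hf using hC
  let F : List X → X
    | [] => Classical.arbitrary X
    | a :: l => f a l
  refine ⟨{Y | ∀ l : List X, (∀ x ∈ l, x ∈ Y) → F l ∈ Y}, ⟨F, rfl⟩, fun z hz a ha => ?_⟩
  rw [hf a]
  intro l hl
  exact hz (a :: l) (List.forall_mem_cons.mpr ⟨ha, hl⟩)

theorem IsStationaryOn.exists_isStationaryOn_fiber {S : Set (Set X)} {g : Set X → X}
    (hS : IsStationaryOn X S) (hg : ∀ Y ∈ S, g Y ∈ Y) :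
    ∃ x : X, IsStationaryOn X {Y : Set X | Y ∈ S ∧ g Y = x} := by
  by_contra! hfibre
  simp only [IsStationaryOn, not_forall, Set.not_nonempty_iff_eq_empty] at hfibre
  choose C hC hdisj using hfibre
  obtain ⟨D, hD, hDdiag⟩ := exists_isClubOn_subset_diagonal hC
  obtain ⟨Y, hYS, hYD⟩ := hS D hD
  have hYC : Y ∈ C (g Y) := hDdiag hYD (g Y) (hg Y hYS)
  exact (hdisj (g Y)).subset ⟨⟨hYS, rfl⟩, hYC⟩

end

/-- Fodor: For an uncountable set `X`, the club filter on `𝒫(X)` is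
normal: the diagonal intersection `Δ_{a∈X} C a = {z : ∀ a ∈ z, z ∈ C a}` of any
`X`-indexed family of clubs contains a club.  Equivalently, every function
`g : 𝒫(X) → X` which is regressive on a stationary set `S` is constant on a
stationary subset of `S`. -/
theorem stmt15 (X : Type*) [Uncountable X] :
    (∀ C : X → Set (Set X), (∀ a : X, IsClubOn X (C a)) →
      ∃ D : Set (Set X), IsClubOn X D ∧ D ⊆ {z : Set X | ∀ a ∈ z, z ∈ C a}) ∧
    (∀ (S : Set (Set X)) (g : Set X → X), IsStationaryOn X S →
      (∀ Y ∈ S, g Y ∈ Y) →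
      ∃ x : X, IsStationaryOn X {Y : Set X | Y ∈ S ∧ g Y = x}) :=
  ⟨fun _ hC => exists_isClubOn_subset_diagonal hC,
    fun _ _ hS hg => hS.exists_isStationaryOn_fiber hg⟩
end

section
/- (Ulam) Let κ be an infinite cardinal. Then every stationary subset S of κ⁺ (stationary in the classical sense) can be partitioned into κ⁺ many pairwise disjoint stationary subsets of κ⁺. -/
/-!
Ulam matrix. Fix for every `β < κ⁺` an injection `f β : β → κ` and let the entry in row `α`,
column `ξ` be `{β ∈ (α, κ⁺) | f β α = ξ}`; entries of one column in different rows are disjoint.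
Since fewer than `cf κ⁺ = κ⁺` clubs intersect in a club, in each row `α` one of the `κ` entries
meets `S` in a stationary set (they cover the stationary set `S ∩ (α, κ⁺)`). By pigeonhole, one
column is chosen by `κ⁺` rows, which gives `κ⁺` pairwise disjoint stationary subsets of `S`; the
rest of `S` is thrown into one of them.
-/

/-- `C` is a club on `δ` in the classical sense: a set of ordinals `< δ`, unbounded
in `δ` and closed under suprema of its nonempty subsets bounded below `δ`. -/
def IsClassicalClub (δ : Ordinal) (C : Set Ordinal) : Prop :=
  (∀ x ∈ C, x < δ) ∧ (∀ x < δ, ∃ y ∈ C, x ≤ y) ∧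
  ∀ T ⊆ C, T.Nonempty → sSup T < δ → sSup T ∈ C

/-- `S` is stationary on `δ` in the classical sense: it meets every classical club. -/
def IsClassicalStationary (δ : Ordinal) (S : Set Ordinal) : Prop :=
  ∀ C : Set Ordinal, IsClassicalClub δ C → (S ∩ C).Nonempty

open Cardinal Set Function

universe u v

theorem Set.exists_injOn_mapsTo_of_lift_mk_le {α : Type u} {β : Type v} [Nonempty β]
    {s : Set α} {t : Set β} (h : lift.{v} #s ≤ lift.{u} #t) :
    ∃ g : α → β, InjOn g s ∧ MapsTo g s t := by
  obtain ⟨e⟩ := lift_mk_le'.mp h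
  refine ⟨extend Subtype.val (fun x => (e x : β)) fun _ => Classical.arbitrary β, ?_, ?_⟩
  · intro x hx y hy hxy
    simp only [Subtype.val_injective.extend_apply (a := ⟨x, hx⟩),
      Subtype.val_injective.extend_apply (a := ⟨y, hy⟩)] at hxy
    exact congrArg Subtype.val (e.injective (Subtype.ext hxy))
  · intro x hx
    rw [Subtype.val_injective.extend_apply (a := ⟨x, hx⟩)]
    exact (e ⟨x, hx⟩).2

theorem Set.exists_partition_of_pairwiseDisjoint {ι α : Type*} {s : Set ι} {i₀ : ι}
    (hi₀ : i₀ ∈ s) {S : Set α} {P : ι → Set α} (hP : s.PairwiseDisjoint P)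
    (hPS : ∀ i ∈ s, P i ⊆ S) :
    ∃ T : ι → Set α, (∀ i ∈ s, P i ⊆ T i ∧ T i ⊆ S) ∧ s.PairwiseDisjoint T ∧
      S = ⋃ i ∈ s, T i := by
  classical
  set R := S \ ⋃ i ∈ s, P i
  have hR : ∀ i ∈ s, Disjoint R (P i) := fun i hi =>
    disjoint_sdiff_left.mono_right (subset_biUnion_of_mem hi)
  set T := update P i₀ (P i₀ ∪ R)
  have hT : ∀ i ∈ s, P i ⊆ T i ∧ T i ⊆ S := by
    intro i hi
    rcases eq_or_ne i i₀ with rfl | hne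
    · simpa [T] using ⟨hPS i hi, sdiff_subset⟩
    · simpa [T, hne] using hPS i hi
  refine ⟨T, hT, ?_, subset_antisymm (fun x hx => ?_) (iUnion₂_subset fun i hi => (hT i hi).2)⟩
  · intro i hi j hj hij
    simp only [onFun, T]
    rcases eq_or_ne i i₀ with rfl | hi'
    · rw [update_self, update_of_ne hij.symm]
      exact (hP hi hj hij).union_left (hR j hj)
    rcases eq_or_ne j i₀ with rfl | hj'
    · rw [update_self, update_of_ne hij]
      exact (hP hi hj hij).union_right (hR i hi).symm
    · rw [update_of_ne hi', update_of_ne hj']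
      exact hP hi hj hij
  · by_cases hxP : x ∈ ⋃ i ∈ s, P i
    · obtain ⟨i, hi, hxi⟩ := mem_iUnion₂.1 hxP
      exact mem_biUnion hi ((hT i hi).1 hxi)
    · refine mem_biUnion hi₀ ?_
      simp only [T, update_self]
      exact Or.inr ⟨hx, hxP⟩

section Clubs

variable {δ : Ordinal.{u}}

theorem isClassicalClub_Iio : IsClassicalClub δ (Iio δ) :=
  ⟨fun _ hx => hx, fun x hx => ⟨x, hx, le_rfl⟩, fun _ _ _ h => h⟩

theorem isClassicalClub_Ioo (hδ : Order.IsSuccLimit δ) {α : Ordinal} (hα : α < δ) :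
    IsClassicalClub δ (Ioo α δ) := by
  refine ⟨fun _ hx => hx.2, fun x hx => ⟨max (Order.succ α) x, ⟨?_, ?_⟩, le_max_right _ _⟩, ?_⟩
  · exact (Order.lt_succ α).trans_le (le_max_left _ _)
  · exact max_lt (hδ.succ_lt hα) hx
  · rintro T hT ⟨t, ht⟩ hsup
    exact ⟨(hT ht).1.trans_le (le_csSup ⟨δ, fun a ha => (hT ha).2.le⟩ ht), hsup⟩

theorem IsClassicalClub.iSup_mem {C : Set Ordinal.{u}} (hC : IsClassicalClub δ C)
    {a b : ℕ → Ordinal.{u}} (hb : ∀ n, b n ∈ C) (hab : ∀ n, a n ≤ b n)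
    (hba : ∀ n, b n ≤ a (n + 1)) (ha : ⨆ n, a n < δ) : ⨆ n, a n ∈ C := by
  have hsup : ⨆ n, b n = ⨆ n, a n :=
    le_antisymm (ciSup_le fun n => (hba n).trans (Ordinal.le_iSup a (n + 1)))
      (ciSup_le fun n => (hab n).trans (Ordinal.le_iSup b n))
  rw [← hsup] at ha ⊢
  exact hC.2.2 _ (range_subset_iff.2 hb) (range_nonempty b) ha

theorem IsClassicalClub.iInter {ι : Type v} [Nonempty ι] (hδ : ℵ₀ < δ.cof)
    (hι : lift.{u} #ι < lift.{v} δ.cof) {C : ι → Set Ordinal.{u}}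
    (hC : ∀ i, IsClassicalClub δ (C i)) : IsClassicalClub δ (⋂ i, C i) := by
  choose! next hnext_mem hnext_ge using fun i => (hC i).2.1
  set g : Ordinal.{u} → Ordinal.{u} := fun z => ⨆ i, next i z
  have hg_lt : ∀ z < δ, g z < δ := fun z hz =>
    Ordinal.lift_iSup_lt_of_lt_cof (by rwa [← Ordinal.lift_cof])
      fun i => (hC i).1 _ (hnext_mem i z hz)
  have hnext_le : ∀ i, ∀ z < δ, next i z ≤ g z := fun i z hz =>
    le_ciSup ⟨δ, by rintro _ ⟨j, rfl⟩; exact ((hC j).1 _ (hnext_mem j z hz)).le⟩ i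
  refine ⟨fun x hx => (hC (Classical.arbitrary ι)).1 x (mem_iInter.1 hx _), fun x hx => ?_,
    fun T hT hTne hTδ => mem_iInter.2 fun i =>
      (hC i).2.2 T (hT.trans (iInter_subset C i)) hTne hTδ⟩
  -- along the iterates of `g`, the points `next i (a n)` interleave with `a n` for every `i`
  set a : ℕ → Ordinal.{u} := fun n => g^[n] x
  have ha_lt : ∀ n, a n < δ := fun n => by
    induction n with
    | zero => exact hx
    | succ n ih => simpa only [a, iterate_succ_apply'] using hg_lt _ ih
  have hsup : ⨆ n, a n < δ :=
    Ordinal.lift_iSup_lt_of_lt_cof (by simpa using hδ) ha_lt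
  refine ⟨⨆ n, a n, mem_iInter.2 fun i => (hC i).iSup_mem (b := fun n => next i (a n))
    (fun n => hnext_mem i _ (ha_lt n)) (fun n => hnext_ge i _ (ha_lt n)) (fun n => ?_) hsup,
    Ordinal.le_iSup a 0⟩
  simpa only [a, iterate_succ_apply'] using hnext_le i _ (ha_lt n)

theorem IsClassicalClub.inter (hδ : ℵ₀ < δ.cof) {C D : Set Ordinal.{u}}
    (hC : IsClassicalClub δ C) (hD : IsClassicalClub δ D) : IsClassicalClub δ (C ∩ D) := by
  rw [inter_eq_iInter]
  refine IsClassicalClub.iInter hδ ?_ (Bool.forall_bool.2 ⟨hD, hC⟩)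
  simpa using (natCast_lt_aleph0 (n := 2)).trans hδ

end Clubs

namespace IsClassicalStationary

variable {δ : Ordinal.{u}} {S : Set Ordinal.{u}}

theorem nonempty (hS : IsClassicalStationary δ S) : S.Nonempty :=
  (hS _ isClassicalClub_Iio).mono inter_subset_left

theorem mono {S' : Set Ordinal.{u}} (hS : IsClassicalStationary δ S) (h : S ⊆ S') :
    IsClassicalStationary δ S' :=
  fun C hC => (hS C hC).mono (inter_subset_inter_left C h)

theorem inter_club (hδ : ℵ₀ < δ.cof) (hS : IsClassicalStationary δ S) {C : Set Ordinal.{u}}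
    (hC : IsClassicalClub δ C) : IsClassicalStationary δ (S ∩ C) := fun D hD => by
  simpa only [inter_assoc] using hS _ (hC.inter hδ hD)

theorem exists_inter_of_subset_iUnion {ι : Type v} (hδ : ℵ₀ < δ.cof)
    (hι : lift.{u} #ι < lift.{v} δ.cof) (hS : IsClassicalStationary δ S)
    {A : ι → Set Ordinal.{u}} (hSA : S ⊆ ⋃ i, A i) :
    ∃ i, IsClassicalStationary δ (S ∩ A i) := by
  have : Nonempty ι := by
    obtain ⟨x, hx⟩ := hS.nonempty
    obtain ⟨i, -⟩ := mem_iUnion.1 (hSA hx)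
    exact ⟨i⟩
  by_contra! h
  simp only [IsClassicalStationary, not_forall, not_nonempty_iff_eq_empty] at h
  choose D hD hSAD using h
  obtain ⟨x, hxS, hxD⟩ := hS _ (IsClassicalClub.iInter hδ hι hD)
  obtain ⟨i, hxA⟩ := mem_iUnion.1 (hSA hxS)
  exact (hSAD i).subset ⟨⟨hxS, hxA⟩, mem_iInter.1 hxD i⟩

end IsClassicalStationary

section UlamMatrix

variable {ι : Type v} (δ : Ordinal.{u}) (f : Ordinal.{u} → Ordinal.{u} → ι)

def ulamMatrix (ξ : ι) (α : Ordinal.{u}) : Set Ordinal.{u} :=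
  {β ∈ Ioo α δ | f β α = ξ}

variable {δ f}

theorem disjoint_ulamMatrix (hf : ∀ β < δ, InjOn (f β) (Iio β)) (ξ : ι)
    {α α' : Ordinal.{u}} (hα : α ≠ α') : Disjoint (ulamMatrix δ f ξ α) (ulamMatrix δ f ξ α') :=
  disjoint_left.2 fun β ⟨⟨hαβ, hβδ⟩, hξ⟩ ⟨⟨hα'β, _⟩, hξ'⟩ =>
    hα (hf β hβδ hαβ hα'β (hξ.trans hξ'.symm))

theorem IsClassicalStationary.exists_inter_ulamMatrix (hδ : ℵ₀ < δ.cof)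
    (hι : lift.{u} #ι < lift.{v} δ.cof) {S : Set Ordinal.{u}} (hS : IsClassicalStationary δ S)
    {α : Ordinal.{u}} (hα : α < δ) : ∃ ξ, IsClassicalStationary δ (S ∩ ulamMatrix δ f ξ α) := by
  have hδ_lim : Order.IsSuccLimit δ := Ordinal.one_lt_cof_iff.1 (one_lt_aleph0.trans hδ)
  have hSα := hS.inter_club hδ (isClassicalClub_Ioo hδ_lim hα)
  obtain ⟨ξ, hξ⟩ := hSα.exists_inter_of_subset_iUnion hδ hι (A := (ulamMatrix δ f · α))
    fun β hβ => mem_iUnion.2 ⟨f β α, hβ.2, rfl⟩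
  exact ⟨ξ, hξ.mono fun β ⟨⟨hβS, _⟩, hβ⟩ => ⟨hβS, hβ⟩⟩

end UlamMatrix

theorem IsClassicalStationary.exists_pairwiseDisjoint_stationary_subsets {κ : Cardinal.{u}}
    (hκ : ℵ₀ ≤ κ) {S : Set Ordinal.{u}} (hS : IsClassicalStationary (Order.succ κ).ord S) :
    ∃ P : Ordinal.{u} → Set Ordinal.{u},
      (∀ i < (Order.succ κ).ord, IsClassicalStationary (Order.succ κ).ord (P i) ∧ P i ⊆ S) ∧
      (Iio (Order.succ κ).ord).PairwiseDisjoint P := by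
  set δ := (Order.succ κ).ord
  have hcof : δ.cof = Order.succ κ := (isRegular_succ hκ).cof_ord
  have hδ : ℵ₀ < δ.cof := hcof ▸ hκ.trans_lt (Order.lt_succ κ)
  have hι : lift.{u} #(Iio κ.ord) < lift.{u + 1} δ.cof := by simp [hcof]
  have : Nonempty (Iio κ.ord) := ⟨⟨0, by simpa using aleph0_pos.trans_le hκ⟩⟩
  have hulam : ∀ β < δ, ∃ g : Ordinal.{u} → Iio κ.ord, InjOn g (Iio β) := fun β hβ =>
    (exists_injOn_mapsTo_of_lift_mk_le (s := Iio β) (t := (univ : Set (Iio κ.ord)))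
      (by simpa [← Ordinal.lift_card, Order.lt_succ_iff] using lt_ord.1 hβ)).imp fun _ h => h.1
  choose! f hf using hulam
  have hrow : ∀ α < δ, ∃ ξ, IsClassicalStationary δ (S ∩ ulamMatrix δ f ξ α) :=
    fun α hα => hS.exists_inter_ulamMatrix hδ hι hα
  choose! ξ hξ using hrow
  obtain ⟨ξ₀, t, htδ, hδt, hξt⟩ := infinite_pigeonhole_set (fun α : Iio δ => ξ α) #(Iio δ)
    le_rfl (by simpa [δ] using (aleph0_le_lift.2 hκ).trans (Order.le_succ _))
    (by simp [δ, (isRegular_succ (aleph0_le_lift.2 hκ)).cof_ord])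
  obtain ⟨e, he, heδ⟩ := exists_injOn_mapsTo_of_lift_mk_le (lift_le.2 hδt)
  refine ⟨fun i => S ∩ ulamMatrix δ f ξ₀ (e i), fun i hi => ⟨?_, inter_subset_left⟩,
    fun i hi j hj hij => ?_⟩
  · simpa only [hξt (heδ hi)] using hξ (e i) (htδ (heδ hi))
  · exact (disjoint_ulamMatrix hf ξ₀ (he.ne hi hj hij)).mono inter_subset_right inter_subset_right

theorem stmt19_general (κ : Cardinal) (hκ : Cardinal.aleph0 ≤ κ)
    (S : Set Ordinal)
    (hstat : IsClassicalStationary (Order.succ κ).ord S) :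
    ∃ T : Ordinal → Set Ordinal,
      (∀ i < (Order.succ κ).ord,
        IsClassicalStationary (Order.succ κ).ord (T i) ∧ T i ⊆ S) ∧
      (∀ i < (Order.succ κ).ord, ∀ j < (Order.succ κ).ord,
        i ≠ j → Disjoint (T i) (T j)) ∧
      S = ⋃ i ∈ Set.Iio (Order.succ κ).ord, T i := by
  obtain ⟨P, hP, hPdisj⟩ := hstat.exists_pairwiseDisjoint_stationary_subsets hκ
  have hpos : (0 : Ordinal) ∈ Iio (Order.succ κ).ord := by simp
  obtain ⟨T, hPT, hTdisj, hST⟩ :=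
    exists_partition_of_pairwiseDisjoint hpos hPdisj fun i hi => (hP i hi).2
  exact ⟨T, fun i hi => ⟨(hP i hi).1.mono (hPT i hi).1, (hPT i hi).2⟩,
    fun i hi j hj hij => hTdisj hi hj hij, hST⟩

/-- Ulam: Let `κ` be an infinite cardinal.  Every stationary subset
`S` of `κ⁺` can be partitioned into `κ⁺` many pairwise disjoint stationary subsets of
`κ⁺` (the pieces are indexed by the ordinals below `κ⁺`). -/
theorem stmt19 (κ : Cardinal) (hκ : Cardinal.aleph0 ≤ κ)
    (S : Set Ordinal) (hS : S ⊆ Set.Iio (Order.succ κ).ord)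
    (hstat : IsClassicalStationary (Order.succ κ).ord S) :
    ∃ T : Ordinal → Set Ordinal,
      (∀ i < (Order.succ κ).ord,
        IsClassicalStationary (Order.succ κ).ord (T i) ∧ T i ⊆ S) ∧
      (∀ i < (Order.succ κ).ord, ∀ j < (Order.succ κ).ord,
        i ≠ j → Disjoint (T i) (T j)) ∧
      S = ⋃ i ∈ Set.Iio (Order.succ κ).ord, T i :=
  stmt19_general κ hκ S hstat
end
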